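/- arXiv:1810.05522 — 2 statements merged into one kernel-verified Lean document; each statement's English description precedes it below -/
import Mathlib

section
/- Let n_2 = ⌊(N(d−1)−1)/2⌋ and let (t_k)_{k=0}^{n_2} be arbitrary complex numbers. Then U_(t) = Σ_{k,l=0}^{n_2} t_k t̄_l |R̃_{N,d;k+l+1}⟩⟨R̃_{N,d;k+l+1}| is an entanglement witness for the D-symmetric system: U_(t) is Hermitian, P_D U_(t) P_D = U_(t), and Tr(U_(t) σ) ≥ 0 for every pure fully separable D-symmetric state σ = (|ξ⟩⟨ξ|)^{⊗N} with σ = P_D σ P_D and ξ ∈ ℂ^d a unit vector. -/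
open scoped BigOperators ComplexConjugate ComplexOrder Matrix
noncomputable section
open MeasureTheory

namespace DSym

/-- Index set of the computational basis of `(ℂ^d)^{⊗N}`. -/
abbrev Idx (d N : ℕ) := Fin N → Fin d

/-- `|i| = i_1 + ⋯ + i_N`. -/
def wsum {d N : ℕ} (i : Idx d N) : ℕ := ∑ j, (i j : ℕ)

/-- `C(N,k)_d = #{i ∈ {0,…,d−1}^N : |i| = k}`. -/
def Ccount (d N k : ℕ) : ℕ := (Finset.univ.filter (fun i : Idx d N => wsum i = k)).card

/-- The D-symmetrizator `P_D`. -/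
def PD (d N : ℕ) : Matrix (Idx d N) (Idx d N) ℂ :=
  Matrix.of fun i j => if wsum i = wsum j then ((Ccount d N (wsum j) : ℂ))⁻¹ else 0

/-- The symmetrizator `P_S`. -/
def PS (d N : ℕ) : Matrix (Idx d N) (Idx d N) ℂ :=
  Matrix.of fun i j =>
    ((N.factorial : ℂ))⁻¹ *
      ((Finset.univ.filter (fun σ : Equiv.Perm (Fin N) => i = fun k => j (σ k))).card : ℂ)

/-- The product state `|ξ^1⟩⟨ξ^1| ⊗ ⋯ ⊗ |ξ^N⟩⟨ξ^N|` as a matrix. -/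
def prodProj {d N : ℕ} (ξ : Fin N → (Fin d → ℂ)) : Matrix (Idx d N) (Idx d N) ℂ :=
  Matrix.of fun i i' => ∏ j, ξ j (i j) * conj (ξ j (i' j))

/-- Full separability of a multipartite state. -/
def FullySep {d N : ℕ} (ρ : Matrix (Idx d N) (Idx d N) ℂ) : Prop :=
  ∃ (n : ℕ) (lam : Fin n → ℝ) (ξ : Fin n → Fin N → (Fin d → ℂ)),
    (∀ α, 0 < lam α) ∧ (∀ α j, ∑ x, Complex.normSq (ξ α j x) = 1) ∧
      ρ = ∑ α, (lam α : ℂ) • prodProj (ξ α)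

/-- The restricted Dicke vector `|R_{N,d;k}⟩`. -/
def Rvec (d N k : ℕ) : Idx d N → ℂ := fun i => if wsum i = k then 1 else 0

/-- The rank-one operator `|R_{N,d;k}⟩⟨R_{N,d;k}|`. -/
def RProj (d N k : ℕ) : Matrix (Idx d N) (Idx d N) ℂ :=
  Matrix.vecMulVec (Rvec d N k) (star (Rvec d N k))

/-- Diagonal restricted Dicke state with coefficients `p`. -/
def dickeDiag (d N : ℕ) (p : ℕ → ℝ) : Matrix (Idx d N) (Idx d N) ℂ :=
  ∑ k ∈ Finset.range (N * (d - 1) + 1), (p k : ℂ) • RProj d N k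

/-- Partial transposition of the first `m` tensor factors (entrywise). -/
def Gamma {d N : ℕ} (m : ℕ) (ρ : Matrix (Idx d N) (Idx d N) ℂ) :
    Matrix (Idx d N) (Idx d N) ℂ :=
  Matrix.of fun i j =>
    ρ (fun k => if (k : ℕ) < m then j k else i k) (fun k => if (k : ℕ) < m then i k else j k)

/-- D-symmetry of a state: `ρ = P_D ρ P_D`. -/
def IsDSymm {d N : ℕ} (ρ : Matrix (Idx d N) (Idx d N) ℂ) : Prop :=
  ρ = PD d N * ρ * PD d N

/-- A pure fully separable D-symmetric state `σ = (|ξ⟩⟨ξ|)^{⊗N}`, `ξ` a unit vector. -/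
def PureDSymmProd {d N : ℕ} (σ : Matrix (Idx d N) (Idx d N) ℂ) : Prop :=
  ∃ ξ : Fin d → ℂ,
    (∑ x, Complex.normSq (ξ x) = 1) ∧ σ = prodProj (fun _ : Fin N => ξ) ∧ IsDSymm σ

/-- Entanglement witness for the D-symmetric system. -/
def IsDWitness {d N : ℕ} (W : Matrix (Idx d N) (Idx d N) ℂ) : Prop :=
  W.IsHermitian ∧ W = PD d N * W * PD d N ∧
    ∀ σ : Matrix (Idx d N) (Idx d N) ℂ, PureDSymmProd σ → 0 ≤ (W * σ).trace

/-- The dual restricted Dicke vector. -/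
def Rtilde (d N k : ℕ) : Idx d N → ℂ := ((Ccount d N k : ℂ))⁻¹ • Rvec d N k

/-- Solution of the generalized moment problem on `[0,∞)`. -/
def IsGenMomentSolution (n : ℕ) (p : ℕ → ℝ) : Prop :=
  ∃ (σ : Measure ℝ) (M : ℝ), IsFiniteMeasure σ ∧ σ {x | x < 0} = 0 ∧
    (∀ k ≤ n, Integrable (fun t => t ^ k) σ) ∧ 0 ≤ M ∧
    (∀ k < n, p k = ∫ t, t ^ k ∂σ) ∧ p n = (∫ t, t ^ n ∂σ) + M

/-- Solution of the strict moment problem on `[0,∞)`. -/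
def IsStrictMomentSolution (n : ℕ) (p : ℕ → ℝ) : Prop :=
  ∃ σ : Measure ℝ, IsFiniteMeasure σ ∧ σ {x | x < 0} = 0 ∧
    (∀ k ≤ n, Integrable (fun t => t ^ k) σ) ∧ (∀ k ≤ n, p k = ∫ t, t ^ k ∂σ)


/-- The normalization constant `C_z = (Σ_{i=0}^{d−1} |z|^{2i})^{−1/2}`. -/
def Cz (d : ℕ) (z : ℂ) : ℝ := (∑ j ∈ Finset.range d, ‖z‖ ^ (2 * j)) ^ (-(1/2 : ℝ))

/-- The vector `ζ_z = C_z Σ_{i=0}^{d−1} z^i |i⟩`. -/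
def zeta (d : ℕ) (z : ℂ) : Fin d → ℂ := fun i => (Cz d z : ℂ) * z ^ (i : ℕ)

/-- The basis vector `|d−1⟩`. -/
def topVec (d : ℕ) : Fin d → ℂ := fun x => if (x : ℕ) = d - 1 then 1 else 0

/-- Sum of the first `m` coordinates of a tuple. -/
def wsumFirst {d N : ℕ} (m : ℕ) (i : Idx d N) : ℕ :=
  ∑ j ∈ Finset.univ.filter (fun j : Fin N => (j : ℕ) < m), (i j : ℕ)

/-- Sum of the last `N − m` coordinates of a tuple. -/
def wsumLast {d N : ℕ} (m : ℕ) (i : Idx d N) : ℕ :=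
  ∑ j ∈ Finset.univ.filter (fun j : Fin N => m ≤ (j : ℕ)), (i j : ℕ)

/-- The vector `|R_{m,d;a}⟩ ⊗ |R_{N−m,d;b}⟩`, viewed inside `(ℂ^d)^{⊗N}`. -/
def splitVec (d N m : ℕ) (a b : ℤ) : Idx d N → ℂ :=
  fun i => if (wsumFirst m i : ℤ) = a ∧ (wsumLast m i : ℤ) = b then 1 else 0

/-- The operator `A_s` from the decomposition of `Γ_m(ρ)`. -/
def Amat (d N m : ℕ) (p : ℕ → ℝ) (s : ℤ) : Matrix (Idx d N) (Idx d N) ℂ :=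
  ∑ k ∈ Finset.Icc (max 0 (-s)) (min ((m : ℤ) * ((d : ℤ) - 1)) ((((N : ℤ) - (m : ℤ)) * ((d : ℤ) - 1)) - s)),
  ∑ l ∈ Finset.Icc (max 0 (-s)) (min ((m : ℤ) * ((d : ℤ) - 1)) ((((N : ℤ) - (m : ℤ)) * ((d : ℤ) - 1)) - s)),
    (p (k + l + s).toNat : ℂ) •
      Matrix.vecMulVec (splitVec d N m k (k + s)) (star (splitVec d N m l (l + s)))

/-- The permutation unitary `F_σ`, `F_σ|ξ_1,…,ξ_N⟩ = |ξ_{σ⁻¹(1)},…,ξ_{σ⁻¹(N)}⟩`. -/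
def Fmat (d N : ℕ) (σ : Equiv.Perm (Fin N)) : Matrix (Idx d N) (Idx d N) ℂ :=
  Matrix.of fun x i => if x = fun k => i (σ.symm k) then 1 else 0

/-- Partial transposition with respect to the binary string `b`. -/
def partialT {d N : ℕ} (b : Fin N → Bool) (ρ : Matrix (Idx d N) (Idx d N) ℂ) :
    Matrix (Idx d N) (Idx d N) ℂ :=
  Matrix.of fun i j => ρ (fun k => if b k then j k else i k) (fun k => if b k then i k else j k)

end DSym
end


namespace DSym

/-! With `v = ξ^{⊗N}`, the trace of `U` against `|v⟩⟨v|` is the Hankel form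
`Σ t_k t̄_l W(k+l+1)` with `W m = |⟨R̃_m, v⟩|²`. D-symmetry of `|v⟩⟨v|` gives `|v_i|² = W |i|`,
so `∏_r |ξ_{i_r}|²` depends only on `|i|`. Comparing tuples `(a, b, c, …, c)` of equal weight
(this needs `N ≥ 2`), either `ξ_0 ≠ 0` and `|ξ_x|² = c rˣ` is geometric, which turns the form into
`c^N r |Σ t_k rᵏ|²`, or `ξ` vanishes below `d − 1`; then only `W (N(d−1))` survives, and it
can only occur on the diagonal term `k = l = n₂`. -/

open Matrix

section Projector

variable {d N : ℕ}

lemma Ccount_wsum_ne_zero (i : Idx d N) : (Ccount d N (wsum i) : ℂ) ≠ 0 :=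
  Nat.cast_ne_zero.mpr <| Finset.card_ne_zero_of_mem <|
    Finset.mem_filter.mpr ⟨Finset.mem_univ _, rfl⟩

lemma Rtilde_dotProduct (m : ℕ) (v : Idx d N → ℂ) :
    Rtilde d N m ⬝ᵥ v =
      (Ccount d N m : ℂ)⁻¹ * ∑ j ∈ Finset.univ.filter (fun j => wsum j = m), v j := by
  simp only [dotProduct, Rtilde, Rvec, Pi.smul_apply, smul_eq_mul, Finset.mul_sum,
    Finset.sum_filter, mul_ite, ite_mul, mul_one, zero_mul, mul_zero]

lemma star_Rtilde (m : ℕ) : star (Rtilde d N m) = Rtilde d N m := by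
  ext i
  simp only [Rtilde, Rvec, Pi.star_apply, Pi.smul_apply, smul_eq_mul]
  split_ifs <;> simp

lemma PD_conjTranspose : (PD d N)ᴴ = PD d N := by
  ext i j
  simp only [conjTranspose_apply, PD, of_apply, eq_comm (a := wsum j)]
  split_ifs with h <;> simp [h]

lemma PD_mulVec_apply (v : Idx d N → ℂ) (i : Idx d N) :
    (PD d N *ᵥ v) i = Rtilde d N (wsum i) ⬝ᵥ v := by
  rw [Rtilde_dotProduct, mulVec, dotProduct, Finset.mul_sum, Finset.sum_filter]
  refine Finset.sum_congr rfl fun j _ => ?_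
  simp only [PD, of_apply, eq_comm (a := wsum i)]
  split_ifs with h <;> simp [h]

lemma PD_mulVec_comp_wsum (f : ℕ → ℂ) : PD d N *ᵥ (f ∘ wsum) = f ∘ wsum := by
  ext i
  have h : ∀ j ∈ Finset.univ.filter (fun j : Idx d N => wsum j = wsum i),
      (f ∘ wsum) j = f (wsum i) :=
    fun j hj => congrArg f (Finset.mem_filter.mp hj).2
  rw [PD_mulVec_apply, Rtilde_dotProduct, Finset.sum_congr rfl h, Finset.sum_const, nsmul_eq_mul]
  exact inv_mul_cancel_left₀ (Ccount_wsum_ne_zero i) _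

lemma PD_mulVec_Rtilde (m : ℕ) : PD d N *ᵥ Rtilde d N m = Rtilde d N m :=
  PD_mulVec_comp_wsum fun k => (Ccount d N m : ℂ)⁻¹ * if k = m then 1 else 0

lemma PD_mul_vecMulVec_mul_PD (v : Idx d N → ℂ) :
    PD d N * vecMulVec v (star v) * PD d N = vecMulVec (PD d N *ᵥ v) (star (PD d N *ᵥ v)) := by
  rw [mul_vecMulVec, vecMulVec_mul, star_mulVec, PD_conjTranspose]

end Projector

section PureStates

variable {d N : ℕ}

def tensorPowVec (ξ : Fin d → ℂ) : Idx d N → ℂ := fun i => ∏ r, ξ (i r)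

lemma prodProj_const (ξ : Fin d → ℂ) :
    prodProj (fun _ : Fin N => ξ) = vecMulVec (tensorPowVec ξ) (star (tensorPowVec ξ)) := by
  ext i j
  simp [prodProj, tensorPowVec, vecMulVec_apply, Finset.prod_mul_distrib]

lemma normSq_tensorPowVec (ξ : Fin d → ℂ) (i : Idx d N) :
    Complex.normSq (tensorPowVec ξ i) = ∏ r, Complex.normSq (ξ (i r)) :=
  map_prod Complex.normSq _ _

lemma normSq_apply_eq_of_isDSymm {v : Idx d N → ℂ} (hv : IsDSymm (vecMulVec v (star v)))
    (i : Idx d N) : Complex.normSq (v i) = Complex.normSq (Rtilde d N (wsum i) ⬝ᵥ v) := by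
  have h := congrFun (congrFun hv i) i
  rw [PD_mul_vecMulVec_mul_PD, vecMulVec_apply, vecMulVec_apply, Pi.star_apply, Pi.star_apply,
    PD_mulVec_apply, RCLike.star_def, Complex.mul_conj, Complex.mul_conj] at h
  exact_mod_cast h

end PureStates

lemma trace_vecMulVec_mul_vecMulVec {ι : Type*} [Fintype ι] (a v : ι → ℂ) :
    (vecMulVec a (star a) * vecMulVec v (star v)).trace = Complex.normSq (star a ⬝ᵥ v) := by
  rw [vecMulVec_mul_vecMulVec, trace_vecMulVec, dotProduct_smul, dotProduct_comm a,
    star_dotProduct v, smul_eq_mul, RCLike.star_def, Complex.mul_conj]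

lemma isHermitian_sum_mul_conj_smul {ι : Type*} [Fintype ι] (s : Finset ℕ) (t : ℕ → ℂ)
    (A : ℕ → Matrix ι ι ℂ) (hA : ∀ m, (A m).IsHermitian) :
    (∑ k ∈ s, ∑ l ∈ s, (t k * conj (t l)) • A (k + l + 1)).IsHermitian := by
  simp only [IsHermitian, conjTranspose_sum, conjTranspose_smul, (hA _).eq, star_mul',
    RCLike.star_def, Complex.conj_conj]
  rw [Finset.sum_comm]
  simp only [add_comm, mul_comm]

section HankelForms

variable {W : ℕ → ℝ}

lemma hankel_sum_geometric_nonneg {c r : ℝ} (hc : 0 ≤ c) (hr : 0 ≤ r) (s : Finset ℕ)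
    (t : ℕ → ℂ) :
    0 ≤ ∑ k ∈ s, ∑ l ∈ s, t k * conj (t l) * ((c * r ^ (k + l + 1) : ℝ) : ℂ) := by
  have h : ∑ k ∈ s, ∑ l ∈ s, t k * conj (t l) * ((c * r ^ (k + l + 1) : ℝ) : ℂ)
      = ((c * r : ℝ) : ℂ) * ((∑ k ∈ s, t k * (r : ℂ) ^ k) * conj (∑ k ∈ s, t k * (r : ℂ) ^ k)) := by
    rw [map_sum, Finset.sum_mul_sum, Finset.mul_sum]
    refine Finset.sum_congr rfl fun k _ => ?_
    rw [Finset.mul_sum]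
    refine Finset.sum_congr rfl fun l _ => ?_
    simp only [map_mul, map_pow, Complex.conj_ofReal]
    push_cast
    ring
  rw [h, Complex.mul_conj, ← Complex.ofReal_mul, Complex.zero_le_real]
  exact mul_nonneg (mul_nonneg hc hr) (Complex.normSq_nonneg _)

lemma hankel_sum_nonneg_of_eq_zero_of_lt {M n : ℕ} (hn : 2 * n + 1 ≤ M)
    (hW : ∀ m < M, W m = 0) (hWM : 0 ≤ W M) (t : ℕ → ℂ) :
    0 ≤ ∑ k ∈ Finset.range (n + 1), ∑ l ∈ Finset.range (n + 1),
      t k * conj (t l) * (W (k + l + 1) : ℂ) := by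
  refine Finset.sum_nonneg fun k hk => Finset.sum_nonneg fun l hl => ?_
  rw [Finset.mem_range] at hk hl
  rcases (show k + l + 1 < M ∨ (k = n ∧ l = n ∧ 2 * n + 1 = M) by omega) with hlt | ⟨rfl, rfl, rfl⟩
  · simp [hW _ hlt]
  · rw [two_mul] at hWM
    rw [Complex.mul_conj, ← Complex.ofReal_mul, Complex.zero_le_real]
    exact mul_nonneg (Complex.normSq_nonneg _) hWM

end HankelForms

section WeightedProducts

variable {d N : ℕ} {w : Fin d → ℝ} {W : ℕ → ℝ}

lemma exists_wsum_eq (hd : 0 < d) : ∀ {N m : ℕ}, m ≤ N * (d - 1) → ∃ i : Idx d N, wsum i = m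
  | 0, m, hm => ⟨Fin.elim0, by simp only [wsum, Finset.univ_eq_empty, Finset.sum_empty]; omega⟩
  | N + 1, m, hm => by
    obtain ⟨i, hi⟩ := exists_wsum_eq hd (N := N) (m := m - min m (d - 1)) (by
      rw [Nat.succ_mul] at hm; omega)
    refine ⟨Fin.cons ⟨min m (d - 1), by omega⟩ i, ?_⟩
    simp only [wsum, Fin.sum_univ_succ, Fin.cons_zero, Fin.cons_succ] at hi ⊢
    omega

lemma exists_lt_pred_of_wsum_lt {i : Idx d N} (hi : wsum i < N * (d - 1)) :
    ∃ r, (i r : ℕ) < d - 1 := by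
  by_contra! h
  have := Finset.card_nsmul_le_sum Finset.univ (fun r => (i r : ℕ)) (d - 1) fun r _ => h r
  simp only [Finset.card_univ, Fintype.card_fin, smul_eq_mul] at this
  exact absurd hi (not_lt.mpr this)

variable (hN : 2 ≤ N) (hW : ∀ i : Idx d N, ∏ r, w (i r) = W (wsum i))
include hN hW

lemma mul_mul_pow_eq_of_add_eq {a b a' b' c : Fin d} (h : (a : ℕ) + b = a' + b') :
    w a * w b * w c ^ (N - 2) = w a' * w b' * w c ^ (N - 2) := by
  obtain ⟨n, rfl⟩ : ∃ n, N = n + 2 := ⟨N - 2, by omega⟩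
  have hcons : ∀ x y : Fin d, w x * w y * w c ^ n = W (x + y + n * c) := fun x y => by
    simpa [wsum, Fin.prod_univ_succ, Fin.sum_univ_succ, mul_assoc, add_assoc]
      using hW (Fin.cons x (Fin.cons y fun _ => c))
  simp only [Nat.add_sub_cancel, hcons, h]

lemma eq_mul_pow_of_ne_zero (hd : 1 < d) (h0 : w ⟨0, by omega⟩ ≠ 0) (x : Fin d) :
    w x = w ⟨0, by omega⟩ * (w ⟨1, hd⟩ / w ⟨0, by omega⟩) ^ (x : ℕ) := by
  suffices ∀ m (hm : m < d), w ⟨m, hm⟩ = w ⟨0, by omega⟩ * (w ⟨1, hd⟩ / w ⟨0, by omega⟩) ^ m from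
    this x x.2
  intro m
  induction m with
  | zero => simp
  | succ m ih =>
    intro hm
    have h := mul_mul_pow_eq_of_add_eq hN hW (a := ⟨m + 1, hm⟩) (b := ⟨0, by omega⟩)
      (a' := ⟨m, by omega⟩) (b' := ⟨1, hd⟩) (c := ⟨0, by omega⟩) (by simp)
    rw [ih (by omega)] at h
    field_simp at h
    rw [h, pow_succ]
    field_simp

lemma eq_zero_of_lt_pred (hd : 0 < d) (h0 : w ⟨0, hd⟩ = 0) (x : Fin d) (hx : (x : ℕ) < d - 1) :
    w x = 0 := by
  suffices ∀ m (hm : m < d - 1), w ⟨m, by omega⟩ = 0 from this x hx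
  intro m
  induction m with
  | zero => exact fun _ => h0
  | succ m ih =>
    intro hm
    have h := mul_mul_pow_eq_of_add_eq hN hW (a := ⟨m, by omega⟩) (b := ⟨m + 2, by omega⟩)
      (a' := ⟨m + 1, by omega⟩) (b' := ⟨m + 1, by omega⟩) (c := ⟨m + 1, by omega⟩)
      (by dsimp only; omega)
    rw [ih (by omega), zero_mul, zero_mul, ← pow_two, ← pow_add] at h
    exact pow_eq_zero_iff (by omega) |>.mp h.symm

theorem hankel_sum_nonneg (hd : 2 ≤ d) (hw : ∀ x, 0 ≤ w x) {n : ℕ} (hn : 2 * n + 1 ≤ N * (d - 1))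
    (t : ℕ → ℂ) :
    0 ≤ ∑ k ∈ Finset.range (n + 1), ∑ l ∈ Finset.range (n + 1),
      t k * conj (t l) * (W (k + l + 1) : ℂ) := by
  by_cases h0 : w ⟨0, by omega⟩ = 0
  · refine hankel_sum_nonneg_of_eq_zero_of_lt hn (fun m hm => ?_) ?_ t
    · obtain ⟨i, rfl⟩ := exists_wsum_eq (by omega) hm.le
      obtain ⟨r, hr⟩ := exists_lt_pred_of_wsum_lt hm
      rw [← hW]
      exact Finset.prod_eq_zero (Finset.mem_univ r) (eq_zero_of_lt_pred hN hW _ h0 _ hr)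
    · obtain ⟨i, hi⟩ := exists_wsum_eq (by omega : 0 < d) (le_refl (N * (d - 1)))
      rw [← hi, ← hW]
      exact Finset.prod_nonneg fun r _ => hw _
  · have hgeom : ∀ m ≤ N * (d - 1),
        W m = w ⟨0, by omega⟩ ^ N * (w ⟨1, by omega⟩ / w ⟨0, by omega⟩) ^ m := by
      intro m hm
      obtain ⟨i, rfl⟩ := exists_wsum_eq (by omega) hm
      rw [← hW, Finset.prod_congr rfl fun r _ => eq_mul_pow_of_ne_zero hN hW (by omega) h0 (i r),
        Finset.prod_mul_distrib, Finset.prod_const, Finset.prod_pow_eq_pow_sum, Finset.card_univ,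
        Fintype.card_fin, wsum]
    rw [Finset.sum_congr rfl fun k hk => Finset.sum_congr rfl fun l hl => by
      rw [hgeom (k + l + 1) (by simp only [Finset.mem_range] at hk hl; omega)]]
    exact hankel_sum_geometric_nonneg (pow_nonneg (hw _) _) (div_nonneg (hw _) (hw _)) _ t

end WeightedProducts

theorem stmt6 (d N : ℕ) (hd : 2 ≤ d) (hN : 2 ≤ N) (t : ℕ → ℂ)
    (n2 : ℕ) (hn2 : n2 = (N * (d - 1) - 1) / 2)
    (U : Matrix (Idx d N) (Idx d N) ℂ)
    (hU : U = ∑ k ∈ Finset.range (n2 + 1), ∑ l ∈ Finset.range (n2 + 1),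
      (t k * conj (t l)) •
        Matrix.vecMulVec (Rtilde d N (k + l + 1)) (star (Rtilde d N (k + l + 1)))) :
    U.IsHermitian ∧ PD d N * U * PD d N = U ∧
      ∀ σ : Matrix (Idx d N) (Idx d N) ℂ, PureDSymmProd σ → 0 ≤ (U * σ).trace := by
  subst hU
  refine ⟨isHermitian_sum_mul_conj_smul _ t
    (fun m => vecMulVec (Rtilde d N m) (star (Rtilde d N m)))
    fun _ => (posSemidef_vecMulVec_self_star _).isHermitian, ?_, ?_⟩
  · simp only [Matrix.mul_sum, Matrix.sum_mul, Matrix.mul_smul, Matrix.smul_mul,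
      PD_mul_vecMulVec_mul_PD, PD_mulVec_Rtilde]
  · rintro σ ⟨ξ, -, rfl, hσ⟩
    rw [prodProj_const] at hσ ⊢
    simp only [Matrix.sum_mul, Matrix.smul_mul, trace_sum, trace_smul,
      trace_vecMulVec_mul_vecMulVec, smul_eq_mul]
    simp only [star_Rtilde]
    have hM : 0 < N * (d - 1) := Nat.mul_pos (by omega) (by omega)
    refine hankel_sum_nonneg (W := fun m => Complex.normSq (Rtilde d N m ⬝ᵥ tensorPowVec ξ)) hN
      (fun i => ?_) hd (fun x => Complex.normSq_nonneg (ξ x)) (by omega) t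
    rw [← normSq_tensorPowVec, normSq_apply_eq_of_isDSymm hσ]

end DSym
end

section
/- Let 1 ≤ m < N and let ρ = Σ_{k=0}^{N(d−1)} p_k |R_{N,d;k}⟩⟨R_{N,d;k}| with p_k ≥ 0. Then Γ_m(ρ) = Σ_{s=−m(d−1)}^{(N−m)(d−1)} A_s, where A_s = Σ_{k,l} p_{k+l+s} (|R_{m,d;k}⟩ ⊗ |R_{N−m,d;k+s}⟩)(⟨R_{m,d;l}| ⊗ ⟨R_{N−m,d;l+s}|), the indices k, l ranging over max{0,−s} ≤ k, l ≤ min{m(d−1), (N−m)(d−1)−s}. -/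
open scoped BigOperators ComplexConjugate ComplexOrder Matrix
/-! Both sides are compared entrywise. Transposing the first `m` factors exchanges the first
`m` coordinates of the row index `i` and the column index `j`; since `ρ` is diagonal in the weight,
`Γ_m(ρ)_{ij}` is `p` at the weight `|j_{<m}| + |i_{≥m}|` of the exchanged row index, provided both
exchanged indices have the same weight, i.e. `i` and `j` have the same imbalance
`s = |·_{≥m}| - |·_{<m}|`. On the other side `|R_{m,d;k}⟩ ⊗ |R_{N−m,d;k+s}⟩` is the indicator of
the indices of first-block weight `k` and imbalance `s`, so in `Σ_s A_s` the only surviving term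
is `s` the common imbalance, `k = |i_{<m}|`, `l = |j_{<m}|`, with coefficient
`p_{k+l+s} = p_{|j_{<m}| + |i_{≥m}|}`. -/

namespace DSym

section Weights

variable {d N : ℕ}

lemma wsum_le (i : Idx d N) : wsum i ≤ N * (d - 1) := by
  simpa [wsum] using Finset.sum_le_card_nsmul Finset.univ (fun j => (i j : ℕ)) (d - 1)
    fun j _ => Nat.le_sub_one_of_lt (i j).isLt

lemma wsum_eq_wsumFirst_add_wsumLast (m : ℕ) (i : Idx d N) :
    wsum i = wsumFirst m i + wsumLast m i := by
  rw [wsum, wsumFirst, wsumLast,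
    ← Finset.sum_filter_add_sum_filter_not _ fun j : Fin N => (j : ℕ) < m]
  simp only [not_lt]

lemma card_filter_le_val {m : ℕ} (hm : m ≤ N) :
    (Finset.univ.filter fun j : Fin N => m ≤ (j : ℕ)).card = N - m := by
  have h := Finset.card_filter_add_card_filter_not
    (s := (Finset.univ : Finset (Fin N))) (fun j : Fin N => (j : ℕ) < m)
  simp only [Fin.card_filter_val_lt, not_lt, Finset.card_univ, Fintype.card_fin] at h
  omega

lemma sum_val_le_card_mul (i : Idx d N) (s : Finset (Fin N)) :
    ∑ j ∈ s, ((i j : ℕ) : ℤ) ≤ s.card * ((d : ℤ) - 1) := by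
  simpa using Finset.sum_le_card_nsmul s (fun j => ((i j : ℕ) : ℤ)) ((d : ℤ) - 1)
    fun j _ => by have := (i j).isLt; omega

lemma wsumFirst_le {m : ℕ} (hm : m ≤ N) (i : Idx d N) :
    (wsumFirst m i : ℤ) ≤ m * ((d : ℤ) - 1) := by
  have := sum_val_le_card_mul i (Finset.univ.filter fun j : Fin N => (j : ℕ) < m)
  rwa [Fin.card_filter_val_lt, min_eq_right hm, ← Nat.cast_sum] at this

lemma wsumLast_le {m : ℕ} (hm : m ≤ N) (i : Idx d N) :
    (wsumLast m i : ℤ) ≤ ((N : ℤ) - m) * ((d : ℤ) - 1) := by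
  have := sum_val_le_card_mul i (Finset.univ.filter fun j : Fin N => m ≤ (j : ℕ))
  rwa [card_filter_le_val hm, Nat.cast_sub hm, ← Nat.cast_sum] at this

lemma wsumFirst_mix (m : ℕ) (i j : Idx d N) :
    wsumFirst m (fun k => if (k : ℕ) < m then j k else i k) = wsumFirst m j :=
  Finset.sum_congr rfl fun k hk => by simp only [if_pos (Finset.mem_filter.mp hk).2]

lemma wsumLast_mix (m : ℕ) (i j : Idx d N) :
    wsumLast m (fun k => if (k : ℕ) < m then j k else i k) = wsumLast m i :=
  Finset.sum_congr rfl fun k hk => by simp only [if_neg (Finset.mem_filter.mp hk).2.not_gt]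

end Weights

lemma dickeDiag_apply (d N : ℕ) (p : ℕ → ℝ) (x y : Idx d N) :
    dickeDiag d N p x y = if wsum x = wsum y then (p (wsum x) : ℂ) else 0 := by
  simp only [dickeDiag, RProj, Rvec, Matrix.sum_apply, Matrix.smul_apply, Matrix.vecMulVec_apply,
    Pi.star_apply, apply_ite (star : ℂ → ℂ), star_one, star_zero, smul_eq_mul, mul_ite, mul_one,
    mul_zero]
  rw [Finset.sum_eq_single_of_mem (wsum x) (Finset.mem_range_succ_iff.mpr (wsum_le x))]
  · split_ifs <;> simp_all
  · intro k _ hk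
    simp [Ne.symm hk]

lemma Gamma_dickeDiag_apply (d N m : ℕ) (p : ℕ → ℝ) (i j : Idx d N) :
    Gamma m (dickeDiag d N p) i j =
      if wsumFirst m j + wsumLast m i = wsumFirst m i + wsumLast m j then
        (p (wsumFirst m j + wsumLast m i) : ℂ) else 0 := by
  simp only [Gamma, Matrix.of_apply, dickeDiag_apply, wsum_eq_wsumFirst_add_wsumLast m,
    wsumFirst_mix, wsumLast_mix]

lemma splitVec_shift_apply (d N m : ℕ) (k s : ℤ) (i : Idx d N) :
    splitVec d N m k (k + s) i =
      if (wsumFirst m i : ℤ) = k ∧ (wsumLast m i : ℤ) - wsumFirst m i = s then 1 else 0 := by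
  unfold splitVec
  congr 1
  exact propext ⟨fun ⟨h₁, h₂⟩ => ⟨h₁, by omega⟩, fun ⟨h₁, h₂⟩ => ⟨h₁, by omega⟩⟩

lemma Amat_apply {d N m : ℕ} (hm : m ≤ N) (p : ℕ → ℝ) (s : ℤ) (i j : Idx d N) :
    Amat d N m p s i j =
      if (wsumLast m i : ℤ) - wsumFirst m i = s ∧ (wsumLast m j : ℤ) - wsumFirst m j = s then
        (p (wsumFirst m j + wsumLast m i) : ℂ) else 0 := by
  simp only [Amat, Matrix.sum_apply, Matrix.smul_apply, Matrix.vecMulVec_apply, Pi.star_apply,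
    splitVec_shift_apply, apply_ite (star : ℂ → ℂ), star_one, star_zero, smul_eq_mul]
  split_ifs with h
  · obtain ⟨hi, hj⟩ := h
    have mem : ∀ x : Idx d N, (wsumLast m x : ℤ) - wsumFirst m x = s →
        (wsumFirst m x : ℤ) ∈ Finset.Icc (max 0 (-s))
          (min (m * ((d : ℤ) - 1)) (((N : ℤ) - m) * ((d : ℤ) - 1) - s)) := by
      intro x hx
      have := wsumFirst_le hm x
      have := wsumLast_le hm x
      simp only [Finset.mem_Icc, max_le_iff, le_min_iff]
      refine ⟨⟨?_, ?_⟩, ?_, ?_⟩ <;> linarith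
    rw [Finset.sum_eq_single_of_mem _ (mem i hi), Finset.sum_eq_single_of_mem _ (mem j hj)]
    · simp only [hi, hj, and_self, if_true, mul_one]
      congr
      omega
    all_goals intro k _ hk; simp [Ne.symm hk]
  · refine Finset.sum_eq_zero fun k _ => Finset.sum_eq_zero fun l _ => ?_
    split_ifs with hi hj
    · exact absurd ⟨hi.2, hj.2⟩ h
    all_goals simp

lemma sum_Amat_apply {d N m : ℕ} (hm : m ≤ N) (p : ℕ → ℝ) (i j : Idx d N) :
    (∑ s ∈ Finset.Icc (-((m : ℤ) * ((d : ℤ) - 1))) (((N : ℤ) - m) * ((d : ℤ) - 1)),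
        Amat d N m p s) i j =
      if (wsumLast m j : ℤ) - wsumFirst m j = wsumLast m i - wsumFirst m i then
        (p (wsumFirst m j + wsumLast m i) : ℂ) else 0 := by
  have mem : (wsumLast m i : ℤ) - wsumFirst m i ∈
      Finset.Icc (-((m : ℤ) * ((d : ℤ) - 1))) (((N : ℤ) - m) * ((d : ℤ) - 1)) := by
    have := wsumFirst_le hm i
    have := wsumLast_le hm i
    rw [Finset.mem_Icc]
    constructor <;> linarith
  rw [Matrix.sum_apply, Finset.sum_eq_single_of_mem _ mem]
  · simp only [Amat_apply hm, true_and]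
  · intro s _ hs
    simp [Amat_apply hm, Ne.symm hs]

theorem stmt11_general (d N m : ℕ) (hmN : m < N) (p : ℕ → ℝ) :
    Gamma m (dickeDiag d N p) =
      ∑ s ∈ Finset.Icc (-((m : ℤ) * ((d : ℤ) - 1))) (((N : ℤ) - (m : ℤ)) * ((d : ℤ) - 1)),
        Amat d N m p s := by
  ext i j
  rw [Gamma_dickeDiag_apply, sum_Amat_apply hmN.le]
  split_ifs <;> first | rfl | omega

theorem stmt11 (d N m : ℕ) (hd : 2 ≤ d) (hm : 1 ≤ m) (hmN : m < N) (p : ℕ → ℝ)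
    (hp : ∀ k ≤ N * (d - 1), 0 ≤ p k) :
    Gamma m (dickeDiag d N p) =
      ∑ s ∈ Finset.Icc (-((m : ℤ) * ((d : ℤ) - 1))) (((N : ℤ) - (m : ℤ)) * ((d : ℤ) - 1)),
        Amat d N m p s :=
  stmt11_general d N m hmN p

end DSym
end
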